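/- arXiv:1408.2222 — 3 statements merged into one kernel-verified Lean document; each statement's English description precedes it below -/
import Mathlib

section
/- If Π(t) is a symmetric matrix-valued C¹ function on [0,T] satisfying the Riccati equation Π'(t) = -A(t)'Π(t) - Π(t)A(t) + Π(t)B(t)B(t)'Π(t), and Σ(t) is a symmetric positive-definite C¹ solution of Σ'(t) = (A(t) - B(t)B(t)'Π(t))Σ(t) + Σ(t)(A(t) - B(t)B(t)'Π(t))' + B(t)B(t)', then H(t) := Σ(t)⁻¹ - Π(t) satisfies the dual homogeneous Riccati equation H'(t) = -A(t)'H(t) - H(t)A(t) - H(t)B(t)B(t)'H(t). -/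
/-!
Since `d(Σ⁻¹) = -Σ⁻¹ Σ' Σ⁻¹`, substituting the Lyapunov equation for `Σ'` makes every term
containing `Σ` collapse through `Σ⁻¹ Σ = Σ Σ⁻¹ = 1`; subtracting the Riccati equation for `Π'`,
what is left regroups as the homogeneous Riccati equation in `H = Σ⁻¹ - Π`.
-/

open Matrix Set

/-- Entrywise derivative of a matrix-valued function of time. -/
def MDeriv {n m : ℕ} (F : ℝ → Matrix (Fin n) (Fin m) ℝ)
    (F' : Matrix (Fin n) (Fin m) ℝ) (t : ℝ) : Prop :=
  ∀ i j, HasDerivAt (fun s => F s i j) (F' i j) t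

open scoped Matrix.Norms.Operator

/- `HasDerivAt` is the convergence of difference quotients, and the operator-norm topology on
matrices is the product topology, so this derivative is the entrywise one. -/
theorem mDeriv_iff_hasDerivAt {n m : ℕ} {F : ℝ → Matrix (Fin n) (Fin m) ℝ}
    {F' : Matrix (Fin n) (Fin m) ℝ} {t : ℝ} : MDeriv F F' t ↔ HasDerivAt F F' t := by
  refine Iff.symm (hasDerivAt_iff_tendsto_slope.trans ?_)
  refine tendsto_pi_nhds.trans (forall_congr' fun i => tendsto_pi_nhds.trans
    (forall_congr' fun j => ?_))
  rw [hasDerivAt_iff_tendsto_slope]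
  rfl

theorem HasDerivAt.matrix_inv {ι : Type*} [Fintype ι] [DecidableEq ι]
    {F : ℝ → Matrix ι ι ℝ} {F' : Matrix ι ι ℝ} {t : ℝ}
    (hF : HasDerivAt F F' t) (hdet : IsUnit (F t).det) :
    HasDerivAt (fun s => (F s)⁻¹) (-((F t)⁻¹ * F' * (F t)⁻¹)) t := by
  obtain ⟨u, hu⟩ := (isUnit_iff_isUnit_det _).mpr hdet
  have hinv : HasFDerivAt Ring.inverse
      (-ContinuousLinearMap.mulLeftRight ℝ _ (Ring.inverse (F t)) (Ring.inverse (F t))) (F t) := by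
    rw [← hu, Ring.inverse_unit]
    exact hasFDerivAt_ringInverse u
  simp_rw [nonsing_inv_eq_ringInverse]
  exact hinv.comp_hasDerivAt t hF

theorem dual_riccati_identity {R : Type*} [Ring R] {S K : R} (hKS : K * S = 1) (hSK : S * K = 1)
    (a a' q p : R) :
    -(K * ((a - q * p) * S + S * (a' - p * q) + q) * K) - (-a' * p - p * a + p * q * p)
      = -a' * (K - p) - (K - p) * a - (K - p) * q * (K - p) := by
  have hconj : K * ((a - q * p) * S + S * (a' - p * q) + q) * K
      = K * (a - q * p) * (S * K) + (K * S) * (a' - p * q) * K + K * q * K := by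
    noncomm_ring
  rw [hconj, hKS, hSK]
  noncomm_ring

theorem stmt_0_general {n m : ℕ} (T : ℝ)
    (A : ℝ → Matrix (Fin n) (Fin n) ℝ) (B : ℝ → Matrix (Fin n) (Fin m) ℝ)
    (Pmat Smat : ℝ → Matrix (Fin n) (Fin n) ℝ)
    (hPmatsym : ∀ t ∈ Icc (0:ℝ) T, (Pmat t)ᵀ = Pmat t)
    (hSpos : ∀ t ∈ Icc (0:ℝ) T, (Smat t).PosDef)
    (hPmat : ∀ t ∈ Icc (0:ℝ) T,
      MDeriv Pmat (-(A t)ᵀ * Pmat t - Pmat t * A t + Pmat t * (B t * (B t)ᵀ) * Pmat t) t)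
    (hSmat : ∀ t ∈ Icc (0:ℝ) T,
      MDeriv Smat ((A t - B t * (B t)ᵀ * Pmat t) * Smat t
        + Smat t * (A t - B t * (B t)ᵀ * Pmat t)ᵀ + B t * (B t)ᵀ) t) :
    ∀ t ∈ Icc (0:ℝ) T,
      MDeriv (fun s => (Smat s)⁻¹ - Pmat s)
        (-(A t)ᵀ * ((Smat t)⁻¹ - Pmat t) - ((Smat t)⁻¹ - Pmat t) * A t
          - ((Smat t)⁻¹ - Pmat t) * (B t * (B t)ᵀ) * ((Smat t)⁻¹ - Pmat t)) t := by
  intro t ht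
  have hdet : IsUnit (Smat t).det := (hSpos t ht).det_pos.ne'.isUnit
  rw [mDeriv_iff_hasDerivAt]
  refine (((mDeriv_iff_hasDerivAt.1 (hSmat t ht)).matrix_inv hdet).fun_sub
    (mDeriv_iff_hasDerivAt.1 (hPmat t ht))).congr_deriv ?_
  have hBBt : (B t * (B t)ᵀ)ᵀ = B t * (B t)ᵀ := by rw [transpose_mul, transpose_transpose]
  rw [transpose_sub, transpose_mul, hBBt, hPmatsym t ht,
    dual_riccati_identity (nonsing_inv_mul _ hdet) (mul_nonsing_inv _ hdet)]

theorem stmt_0 {n m : ℕ} (T : ℝ) (hT : 0 < T)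
    (A : ℝ → Matrix (Fin n) (Fin n) ℝ) (B : ℝ → Matrix (Fin n) (Fin m) ℝ)
    (hA : Continuous A) (hB : Continuous B)
    (Pmat Smat : ℝ → Matrix (Fin n) (Fin n) ℝ)
    (hPmatsym : ∀ t ∈ Icc (0:ℝ) T, (Pmat t)ᵀ = Pmat t)
    (hSsym : ∀ t ∈ Icc (0:ℝ) T, (Smat t)ᵀ = Smat t)
    (hSpos : ∀ t ∈ Icc (0:ℝ) T, (Smat t).PosDef)
    (hPmat : ∀ t ∈ Icc (0:ℝ) T,
      MDeriv Pmat (-(A t)ᵀ * Pmat t - Pmat t * A t + Pmat t * (B t * (B t)ᵀ) * Pmat t) t)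
    (hSmat : ∀ t ∈ Icc (0:ℝ) T,
      MDeriv Smat ((A t - B t * (B t)ᵀ * Pmat t) * Smat t
        + Smat t * (A t - B t * (B t)ᵀ * Pmat t)ᵀ + B t * (B t)ᵀ) t) :
    ∀ t ∈ Icc (0:ℝ) T,
      MDeriv (fun s => (Smat s)⁻¹ - Pmat s)
        (-(A t)ᵀ * ((Smat t)⁻¹ - Pmat t) - ((Smat t)⁻¹ - Pmat t) * A t
          - ((Smat t)⁻¹ - Pmat t) * (B t * (B t)ᵀ) * ((Smat t)⁻¹ - Pmat t)) t :=
  stmt_0_general T A B Pmat Smat hPmatsym hSpos hPmat hSmat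
end

section
/- The function Y ↦ log det(Σ_T - YΣ₀⁻¹Y') is concave on the convex open set {Y ∈ ℝ^{n×n} : Σ_T - YΣ₀⁻¹Y' ≻ 0}, where Σ₀, Σ_T are symmetric positive definite. -/
/-!
Write `F Y = Σ_T - Y Σ₀⁻¹ Yᵀ`. For `a + b = 1` the defect
`a F X + b F Y - F (a X + b Y) = a b (X - Y) Σ₀⁻¹ (X - Y)ᵀ` is positive semidefinite, so `F` is
concave for the Loewner order; hence its positive definite superlevel set is convex. On positive
definite matrices `log det` is Loewner-monotone and concave: diagonalising `B` relative to `A`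
gives `det (a A + b B) = det A * ∏ (a + b μᵢ)` with `μᵢ ≥ 0`, and weighted AM-GM bounds each
factor below by `μᵢ ^ b`. A monotone concave function of a concave map is concave.
-/

open Matrix

section ConcaveComp

variable {𝕜 E α β : Type*} [Semiring 𝕜] [PartialOrder 𝕜] [AddCommMonoid E] [AddCommMonoid α]
  [PartialOrder α] [AddCommMonoid β] [PartialOrder β] [SMul 𝕜 E] [SMul 𝕜 α] [SMul 𝕜 β]
  {s : Set E} {t : Set β} {f : E → β} {g : β → α}

theorem ConcaveOn.convex_inter_preimage (hf : ConcaveOn 𝕜 s f) (ht : Convex 𝕜 t)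
    (ht' : IsUpperSet t) : Convex 𝕜 (s ∩ f ⁻¹' t) :=
  fun _ hx _ hy _ _ ha hb hab => ⟨hf.1 hx.1 hy.1 ha hb hab,
    ht' (hf.2 hx.1 hy.1 ha hb hab) (ht hx.2 hy.2 ha hb hab)⟩

theorem ConcaveOn.comp_of_mapsTo (hg : ConcaveOn 𝕜 t g) (hf : ConcaveOn 𝕜 s f)
    (hg' : MonotoneOn g t) (hst : Set.MapsTo f s t) : ConcaveOn 𝕜 s (g ∘ f) :=
  ⟨hf.1, fun _ hx _ hy _ _ ha hb hab =>
    (hg.2 (hst hx) (hst hy) ha hb hab).trans <|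
      hg' (hg.1 (hst hx) (hst hy) ha hb hab) (hst (hf.1 hx hy ha hb hab)) (hf.2 hx hy ha hb hab)⟩

end ConcaveComp

namespace Matrix

open scoped MatrixOrder

section Order

variable {m : Type*}

theorem convex_setOf_posDef : Convex ℝ {A : Matrix m m ℝ | A.PosDef} := by
  intro A hA B hB a b ha hb hab
  rcases ha.eq_or_lt with rfl | ha
  · simp_all
  · exact (hA.smul ha).add_posSemidef (hB.posSemidef.smul hb)

theorem isUpperSet_setOf_posDef : IsUpperSet {A : Matrix m m ℝ | A.PosDef} :=
  fun A _ hAB hA => by simpa using (show A.PosDef from hA).add_posSemidef hAB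

theorem convexOn_mul_mul_transpose [Fintype m] {k : Type*} [Fintype k] {P : Matrix k k ℝ}
    (hP : P.PosSemidef) : ConvexOn ℝ Set.univ (fun Y : Matrix m k ℝ => Y * P * Yᵀ) := by
  refine ⟨convex_univ, fun X _ Y _ a b ha hb hab => ?_⟩
  have hgap : a • (X * P * Xᵀ) + b • (Y * P * Yᵀ) - (a • X + b • Y) * P * (a • X + b • Y)ᵀ =
      (a * b) • ((X - Y) * P * (X - Y)ᵀ) := by
    obtain rfl : b = 1 - a := by linarith
    simp only [transpose_add, transpose_smul, transpose_sub, Matrix.mul_add, Matrix.add_mul,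
      Matrix.sub_mul, Matrix.mul_sub, Matrix.smul_mul, Matrix.mul_smul]
    module
  have hXY := hP.mul_mul_conjTranspose_same (X - Y)
  rw [conjTranspose_eq_transpose_of_trivial] at hXY
  rw [le_iff]
  exact hgap ▸ hXY.smul (mul_nonneg ha hb)

end Order

variable {m : Type*} [Fintype m] [DecidableEq m]

lemma IsHermitian.det_smul_one_add_smul {M : Matrix m m ℝ} (hM : M.IsHermitian) (a b : ℝ) :
    (a • 1 + b • M).det = ∏ i, (a + b * hM.eigenvalues i) := by
  have hcfc : a • 1 + b • M = cfc (fun x => a + b * x) M := by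
    rw [cfc_add .., cfc_const_mul .., cfc_id' .., cfc_const ..]
    simp [Algebra.algebraMap_eq_smul_one]
  rw [hcfc, hM.cfc_eq]
  simp [IsHermitian.cfc, -Unitary.conjStarAlgAut_apply]

/-- The `μ i` are the eigenvalues of `A^{-1/2} B A^{-1/2}`. -/
lemma PosDef.exists_det_smul_add_smul_eq_prod {A B : Matrix m m ℝ} (hA : A.PosDef)
    (hB : B.PosSemidef) :
    ∃ μ : m → ℝ, (∀ i, 0 ≤ μ i) ∧
      ∀ a b : ℝ, (a • A + b • B).det = A.det * ∏ i, (a + b * μ i) := by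
  set S := CFC.sqrt A
  have hSS : S * S = A := CFC.sqrt_mul_sqrt_self A hA.posSemidef.nonneg
  have hS : S.IsHermitian := (CFC.sqrt_nonneg A).posSemidef.isHermitian
  have hS_det : IsUnit S.det := by
    refine isUnit_of_mul_isUnit_left (y := S.det) ?_
    rw [← det_mul, hSS]
    exact hA.det_pos.ne'.isUnit
  have hM : (S⁻¹ * B * S⁻¹).PosSemidef := by
    have := hB.mul_mul_conjTranspose_same S⁻¹
    rwa [conjTranspose_nonsing_inv, hS.eq] at this
  refine ⟨hM.isHermitian.eigenvalues, hM.eigenvalues_nonneg, fun a b => ?_⟩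
  have hB' : S * (S⁻¹ * B * S⁻¹) * S = B := by
    simp [Matrix.mul_assoc, nonsing_inv_mul _ hS_det, mul_nonsing_inv_cancel_left _ _ hS_det]
  calc (a • A + b • B).det = (S * (a • 1 + b • (S⁻¹ * B * S⁻¹)) * S).det := by
        rw [Matrix.mul_add, Matrix.add_mul, mul_smul_comm, smul_mul_assoc, mul_smul_comm,
          smul_mul_assoc, Matrix.mul_one, hSS, hB']
    _ = A.det * ∏ i, (a + b * hM.isHermitian.eigenvalues i) := by
        rw [det_mul, det_mul, hM.isHermitian.det_smul_one_add_smul, ← hSS, det_mul]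
        ring

lemma PosDef.det_le_det_add {A P : Matrix m m ℝ} (hA : A.PosDef) (hP : P.PosSemidef) :
    A.det ≤ (A + P).det := by
  obtain ⟨μ, hμ, hdet⟩ := hA.exists_det_smul_add_smul_eq_prod hP
  have h := hdet 1 1
  simp only [one_smul, one_mul] at h
  rw [h]
  refine le_mul_of_one_le_right hA.det_pos.le (Finset.one_le_prod fun i _ => ?_)
  linarith [hμ i]

lemma PosDef.det_rpow_mul_det_rpow_le {A B : Matrix m m ℝ} (hA : A.PosDef)
    (hB : B.PosSemidef) {a b : ℝ} (ha : 0 ≤ a) (hb : 0 ≤ b) (hab : a + b = 1) :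
    A.det ^ a * B.det ^ b ≤ (a • A + b • B).det := by
  obtain ⟨μ, hμ, hdet⟩ := hA.exists_det_smul_add_smul_eq_prod hB
  have hB_det : B.det = A.det * ∏ i, μ i := by simpa using hdet 0 1
  have hA_det := hA.det_pos.le
  calc A.det ^ a * B.det ^ b = A.det * ∏ i, μ i ^ b := by
        rw [hB_det, Real.mul_rpow hA_det (Finset.prod_nonneg fun i _ => hμ i), ← mul_assoc,
          ← Real.rpow_add' hA_det (by simp [hab]), hab, Real.rpow_one,
          Real.finsetProd_rpow _ _ fun i _ => hμ i]
    _ ≤ A.det * ∏ i, (a + b * μ i) := by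
        gcongr with i
        · exact fun i _ => Real.rpow_nonneg (hμ i) b
        · simpa using Real.geom_mean_le_arith_mean2_weighted ha hb zero_le_one (hμ i) hab
    _ = (a • A + b • B).det := (hdet a b).symm

theorem concaveOn_log_det :
    ConcaveOn ℝ {A : Matrix m m ℝ | A.PosDef} (fun A => Real.log A.det) := by
  refine ⟨convex_setOf_posDef, fun A hA B hB a b ha hb hab => ?_⟩
  have hA_det := hA.det_pos
  have hB_det := (show B.PosDef from hB).det_pos
  calc a • Real.log A.det + b • Real.log B.det = Real.log (A.det ^ a * B.det ^ b) := by
        rw [Real.log_mul (by positivity) (by positivity), Real.log_rpow hA_det,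
          Real.log_rpow hB_det, smul_eq_mul, smul_eq_mul]
    _ ≤ Real.log (a • A + b • B).det :=
        Real.log_le_log (by positivity) (hA.det_rpow_mul_det_rpow_le hB.posSemidef ha hb hab)

theorem monotoneOn_log_det :
    MonotoneOn (fun A : Matrix m m ℝ => Real.log A.det) {A | A.PosDef} :=
  fun A hA _ _ hAB => Real.log_le_log hA.det_pos (by simpa using hA.det_le_det_add hAB)

end Matrix

theorem stmt_11_general {n : ℕ} (S0 ST : Matrix (Fin n) (Fin n) ℝ)
    (hS0 : S0.PosDef) :
    ConcaveOn ℝ {Y : Matrix (Fin n) (Fin n) ℝ | (ST - Y * S0⁻¹ * Yᵀ).PosDef}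
      (fun Y => Real.log (ST - Y * S0⁻¹ * Yᵀ).det) := by
  open scoped MatrixOrder in
  have hF : ConcaveOn ℝ Set.univ (fun Y : Matrix (Fin n) (Fin n) ℝ => ST - Y * S0⁻¹ * Yᵀ) :=
    (concaveOn_const ST convex_univ).sub (convexOn_mul_mul_transpose hS0.inv.posSemidef)
  have hdom : Convex ℝ {Y : Matrix (Fin n) (Fin n) ℝ | (ST - Y * S0⁻¹ * Yᵀ).PosDef} := by
    simpa using hF.convex_inter_preimage convex_setOf_posDef isUpperSet_setOf_posDef
  exact concaveOn_log_det.comp_of_mapsTo (hF.subset (Set.subset_univ _) hdom)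
    monotoneOn_log_det fun _ hY => hY

theorem stmt_11 {n : ℕ} (S0 ST : Matrix (Fin n) (Fin n) ℝ)
    (hS0 : S0.PosDef) (hS0sym : S0ᵀ = S0)
    (hST : ST.PosDef) (hSTsym : STᵀ = ST) :
    ConcaveOn ℝ {Y : Matrix (Fin n) (Fin n) ℝ | (ST - Y * S0⁻¹ * Yᵀ).PosDef}
      (fun Y => Real.log (ST - Y * S0⁻¹ * Yᵀ).det) :=
  stmt_11_general S0 ST hS0
end

section
/- In the zero-drift normalized case A(t) ≡ 0 with reachability Gramian M(T,0) = I, and Σ₀, Σ_T ≻ 0, the boundary system Q(0)⁻¹ + P(0)⁻¹ = Σ₀⁻¹, (Q(0) - I)⁻¹ + (P(0) + I)⁻¹ = Σ_T⁻¹ (where P(t) = P(0) + M(t,0), Q(t) = Q(0) - M(t,0)) implies the quadratic equation (I - Q(0)⁻¹)Σ₀(I - Q(0)⁻¹) + (I - Q(0)⁻¹) = Σ_T for the symmetric matrix I - Q(0)⁻¹. -/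
open Matrix

theorem stmt_15 {n : ℕ} (S0 ST Q0 P0 : Matrix (Fin n) (Fin n) ℝ)
    (hS0 : S0.PosDef) (hS0sym : S0ᵀ = S0)
    (hST : ST.PosDef) (hSTsym : STᵀ = ST)
    (hQ0sym : Q0ᵀ = Q0) (hP0sym : P0ᵀ = P0)
    (hQ0inv : IsUnit Q0.det) (hP0inv : IsUnit P0.det)
    (hQ0Iinv : IsUnit (Q0 - 1).det) (hP0Iinv : IsUnit (P0 + 1).det)
    (hdiff : IsUnit (S0⁻¹ - Q0⁻¹).det)
    (hbc0 : Q0⁻¹ + P0⁻¹ = S0⁻¹)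
    (hbcT : (Q0 - 1)⁻¹ + (P0 + 1)⁻¹ = ST⁻¹) :
    (1 - Q0⁻¹) * S0 * (1 - Q0⁻¹) + (1 - Q0⁻¹) = ST := by
  set q := Q0⁻¹ with hq
  set p := P0⁻¹ with hp
  have hS0u : IsUnit S0.det := isUnit_iff_ne_zero.mpr (ne_of_gt hS0.det_pos)
  have hSTu : IsUnit ST.det := isUnit_iff_ne_zero.mpr (ne_of_gt hST.det_pos)
  -- 1 - q = Q0⁻¹ * (Q0 - 1)
  have h1 : (1 : Matrix (Fin n) (Fin n) ℝ) - q = q * (Q0 - 1) := by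
    rw [mul_sub, hq, nonsing_inv_mul _ hQ0inv, mul_one]
  have h2 : (1 : Matrix (Fin n) (Fin n) ℝ) + p = p * (P0 + 1) := by
    rw [mul_add, hp, nonsing_inv_mul _ hP0inv, mul_one]
  have h1u : IsUnit ((1 : Matrix (Fin n) (Fin n) ℝ) - q).det := by
    rw [h1, det_mul]
    exact ((isUnit_nonsing_inv_det _ hQ0inv).mul hQ0Iinv)
  have h2u : IsUnit ((1 : Matrix (Fin n) (Fin n) ℝ) + p).det := by
    rw [h2, det_mul]
    exact ((isUnit_nonsing_inv_det _ hP0inv).mul hP0Iinv)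
  -- q + p = S0⁻¹
  have hsum : q + p = S0⁻¹ := hbc0
  have hsumu : IsUnit (q + p).det := by
    rw [hsum]; exact isUnit_nonsing_inv_det _ hS0u
  -- (Q0 - 1)⁻¹ = (1 - q)⁻¹ * q
  have hQ1 : Q0 - 1 = Q0 * (1 - q) := by
    rw [mul_sub, hq, mul_nonsing_inv _ hQ0inv, mul_one]
  have hP1 : P0 + 1 = P0 * (1 + p) := by
    rw [mul_add, hp, mul_nonsing_inv _ hP0inv, mul_one]
  have hQinv : (Q0 - 1)⁻¹ = (1 - q)⁻¹ * q := by
    rw [hQ1, Matrix.mul_inv_rev]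
  have hPinv : (P0 + 1)⁻¹ = (1 + p)⁻¹ * p := by
    rw [hP1, Matrix.mul_inv_rev]
  -- LHS = (1 - q) * (q + p)⁻¹ * (1 + p)
  have hS0eq : S0 = (q + p)⁻¹ := by
    rw [hsum, nonsing_inv_nonsing_inv _ hS0u]
  have hLHS : (1 - q) * S0 * (1 - q) + (1 - q)
      = (1 - q) * (q + p)⁻¹ * (1 + p) := by
    have : (1 - q) * (q + p)⁻¹ * (1 + p)
        = (1 - q) * (q + p)⁻¹ * (1 - q) + (1 - q) * ((q + p)⁻¹ * (q + p)) := by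
      rw [← mul_assoc]
      rw [← mul_add]
      congr 1
      abel
    rw [hS0eq, this, nonsing_inv_mul _ hsumu, mul_one]
  rw [hLHS]
  -- compute the inverse of the RHS
  set X := (1 - q) * (q + p)⁻¹ * (1 + p) with hX
  have hXu : IsUnit X.det := by
    rw [hX, det_mul, det_mul]
    exact ((h1u.mul (isUnit_nonsing_inv_det _ hsumu)).mul h2u)
  have hXinv : X⁻¹ = (1 + p)⁻¹ * (q + p) * (1 - q)⁻¹ := by
    rw [hX, Matrix.mul_inv_rev, Matrix.mul_inv_rev,
      nonsing_inv_nonsing_inv _ hsumu, mul_assoc]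
  -- key algebraic identity: ST⁻¹ = X⁻¹
  have hcomm : (1 - q)⁻¹ * q * (1 - q) = q := by
    have hc : q * (1 - q) = (1 - q) * q := by noncomm_ring
    rw [mul_assoc, hc, ← mul_assoc, nonsing_inv_mul _ h1u, one_mul]
  have hE : (1 + p) * (((1 - q)⁻¹ * q + (1 + p)⁻¹ * p) * (1 - q)) = q + p := by
    rw [add_mul ((1 - q)⁻¹ * q) ((1 + p)⁻¹ * p) (1 - q), hcomm]
    have hcancel : (1 + p) * ((1 + p)⁻¹ * p * (1 - q)) = p * (1 - q) := by
      rw [← mul_assoc, ← mul_assoc, mul_nonsing_inv _ h2u, one_mul]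
    rw [mul_add, hcancel]
    noncomm_ring
  have hmid : (1 + p)⁻¹ * (q + p) * (1 - q)⁻¹
      = (1 - q)⁻¹ * q + (1 + p)⁻¹ * p := by
    rw [← hE, ← mul_assoc, ← mul_assoc, nonsing_inv_mul _ h2u, one_mul,
      mul_assoc, mul_nonsing_inv _ h1u, mul_one]
  have hkey : ST⁻¹ = X⁻¹ := by
    rw [← hbcT, hQinv, hPinv, hXinv, hmid]
  conv_rhs => rw [← nonsing_inv_nonsing_inv ST hSTu]
  rw [hkey, nonsing_inv_nonsing_inv _ hXu]
end
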